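/- Let A be an N×N Hermitian matrix, z ∈ ℂ with Im z > 0, G = (A - z)^{-1}, and let A_k be the (N-1)×(N-1) matrix obtained by deleting the k-th row and column, with G_k = (A_k - z)^{-1}. Let h_k ∈ ℂ^{N-1} be the k-th column of A with its k-th entry removed. Then Tr G - Tr G_k = (1 + h_k* G_k² h_k)/(A_{kk} - z - h_k* G_k h_k). -/
import Mathlib


open Matrix Complex

lemma aux_trace_submatrix_equiv {m n : Type*} [Fintype m] [Fintype n]
    (A : Matrix m m ℂ) (e : n ≃ m) : (A.submatrix e e).trace = A.trace := by
  simp only [Matrix.trace, Matrix.diag, Matrix.submatrix_apply]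
  exact Fintype.sum_equiv e _ _ fun i => rfl

lemma aux_trace_fromBlocks {m n : Type*} [Fintype m] [Fintype n]
    (A : Matrix m m ℂ) (B : Matrix m n ℂ) (C : Matrix n m ℂ) (D : Matrix n n ℂ) :
    (Matrix.fromBlocks A B C D).trace = A.trace + D.trace := by
  simp [Matrix.trace, Matrix.diag, Fintype.sum_sum_type, Matrix.fromBlocks]

lemma aux_isUnit {m : Type*} [Fintype m] [DecidableEq m] {M : Matrix m m ℂ}
    (hM : M.IsHermitian) {z : ℂ} (hz : z.im ≠ 0) :
    IsUnit (M - z • (1 : Matrix m m ℂ)) := by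
  rw [Matrix.isUnit_iff_isUnit_det, isUnit_iff_ne_zero]
  set U : Matrix m m ℂ := (hM.eigenvectorUnitary : Matrix m m ℂ) with hU
  have hUU : U * star U = 1 := Matrix.mem_unitaryGroup_iff.mp hM.eigenvectorUnitary.2
  have key : M - z • (1 : Matrix m m ℂ)
      = U * (Matrix.diagonal (fun i => (hM.eigenvalues i : ℂ) - z)) * star U := by
    have hd : Matrix.diagonal (fun i => (hM.eigenvalues i : ℂ) - z)
        = Matrix.diagonal ((↑) ∘ hM.eigenvalues) - z • (1 : Matrix m m ℂ) := by
      ext i j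
      rcases eq_or_ne i j with rfl | hij
      · simp
      · simp [Matrix.diagonal_apply_ne _ hij, Matrix.one_apply_ne hij]
    rw [hd, mul_sub, sub_mul]
    congr 1
    · exact hM.spectral_theorem
    · rw [Matrix.mul_smul, mul_one, Matrix.smul_mul, hUU]
  have hdet : (M - z • (1 : Matrix m m ℂ)).det = ∏ i, ((hM.eigenvalues i : ℂ) - z) := by
    rw [key, Matrix.det_mul, Matrix.det_mul, Matrix.det_diagonal, mul_comm U.det,
      mul_assoc, ← Matrix.det_mul, hUU, Matrix.det_one, mul_one]
  rw [hdet]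
  refine Finset.prod_ne_zero_iff.mpr fun i _ hc => hz ?_
  have := congrArg Complex.im hc
  simpa using this

theorem schur_trace_resolvent {n : ℕ} (A : Matrix (Fin (n + 1)) (Fin (n + 1)) ℂ)
    (hA : A.IsHermitian) (z : ℂ) (hz : 0 < z.im) (k : Fin (n + 1)) :
    (A - z • (1 : Matrix (Fin (n + 1)) (Fin (n + 1)) ℂ))⁻¹.trace
        - (A.submatrix k.succAbove k.succAbove - z • (1 : Matrix (Fin n) (Fin n) ℂ))⁻¹.trace
      = (1 + star (fun i => A (k.succAbove i) k) ⬝ᵥ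
            ((A.submatrix k.succAbove k.succAbove - z • 1)⁻¹ ^ 2) *ᵥ
              (fun i => A (k.succAbove i) k)) /
        (A k k - z - star (fun i => A (k.succAbove i) k) ⬝ᵥ
            (A.submatrix k.succAbove k.succAbove - z • 1)⁻¹ *ᵥ
              (fun i => A (k.succAbove i) k)) := by
  classical
  have hzne : z.im ≠ 0 := ne_of_gt hz
  set σ : Fin n → Fin (n + 1) := k.succAbove with hσ
  set h : Fin n → ℂ := fun i => A (σ i) k with hh
  set B : Matrix (Fin (n + 1)) (Fin (n + 1)) ℂ := A - z • 1 with hB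
  set Bk : Matrix (Fin n) (Fin n) ℂ := A.submatrix σ σ - z • 1 with hBk
  have hBu : IsUnit B := aux_isUnit hA hzne
  have hBku : IsUnit Bk := aux_isUnit (hA.submatrix σ) hzne
  haveI iB : Invertible B := hBu.invertible
  haveI iBk : Invertible Bk := hBku.invertible
  set e : Fin (n + 1) ≃ (Fin n ⊕ Unit) :=
    (finSuccEquiv' k).trans (Equiv.optionEquivSumPUnit (Fin n)) with he
  have he1 : ∀ i : Fin n, e.symm (Sum.inl i) = σ i := by
    intro i
    simp [he, Equiv.optionEquivSumPUnit, finSuccEquiv'_symm_some, hσ]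
  have he2 : ∀ u : Unit, e.symm (Sum.inr u) = k := by
    intro u
    simp [he, Equiv.optionEquivSumPUnit, finSuccEquiv'_symm_none]
  set Bc : Matrix (Fin n) Unit ℂ := Matrix.of fun i _ => h i with hBc
  set Br : Matrix Unit (Fin n) ℂ := Matrix.of fun _ j => star (h j) with hBr
  set Bd : Matrix Unit Unit ℂ := Matrix.of fun _ _ => A k k - z with hBd
  have hM : B.submatrix e.symm e.symm = Matrix.fromBlocks Bk Bc Br Bd := by
    ext i j
    cases i with
    | inl i =>
      cases j with
      | inl j =>
        simp only [Matrix.submatrix_apply, he1, Matrix.fromBlocks_apply₁₁, hB, hBk,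
          Matrix.sub_apply, Matrix.smul_apply, Matrix.one_apply, smul_eq_mul]
        by_cases hij : i = j
        · subst hij; simp
        · rw [if_neg hij, if_neg (fun hc => hij (Fin.succAbove_right_injective hc))]
      | inr j =>
        simp only [Matrix.submatrix_apply, he1, he2, Matrix.fromBlocks_apply₁₂, hB, hBc,
          Matrix.sub_apply, Matrix.smul_apply, Matrix.one_apply, smul_eq_mul, Matrix.of_apply, hh]
        rw [if_neg (Fin.succAbove_ne k i)]
        ring
    | inr i =>
      cases j with
      | inl j =>
        simp only [Matrix.submatrix_apply, he1, he2, Matrix.fromBlocks_apply₂₁, hB, hBr,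
          Matrix.sub_apply, Matrix.smul_apply, Matrix.one_apply, smul_eq_mul, Matrix.of_apply, hh]
        rw [if_neg (Fin.succAbove_ne k j).symm, hA.apply]
        ring
      | inr j =>
        simp [he2, hB, hBd]
  haveI iM' : Invertible (Matrix.fromBlocks Bk Bc Br Bd) := by
    rw [← hM]; exact B.submatrixEquivInvertible e.symm e.symm
  haveI iS : Invertible (Bd - Br * ⅟Bk * Bc) :=
    Matrix.invertibleOfFromBlocks₁₁Invertible Bk Bc Br Bd
  set s : ℂ := A k k - z - star h ⬝ᵥ Bk⁻¹ *ᵥ h with hs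
  set q : ℂ := star h ⬝ᵥ (Bk⁻¹ ^ 2) *ᵥ h with hq
  have hrow : Br * ⅟Bk = Matrix.of fun _ j => (star h ᵥ* Bk⁻¹) j := by
    ext u j
    simp [hBr, Matrix.mul_apply, Matrix.vecMul, dotProduct, invOf_eq_nonsing_inv]
  have hcol : ⅟Bk * Bc = Matrix.of fun i _ => (Bk⁻¹ *ᵥ h) i := by
    ext i u
    simp [hBc, Matrix.mul_apply, Matrix.mulVec, dotProduct, invOf_eq_nonsing_inv]
  have hSs : Bd - Br * ⅟Bk * Bc = s • (1 : Matrix Unit Unit ℂ) := by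
    ext u v
    have huv : u = v := Subsingleton.elim _ _
    subst huv
    rw [Matrix.sub_apply, hrow, hs]
    simp only [Matrix.mul_apply, Matrix.of_apply, hBd, hBc, Matrix.smul_apply,
      Matrix.one_apply_eq, smul_eq_mul, mul_one]
    rw [Matrix.dotProduct_mulVec]
    rfl
  have hsne : s ≠ 0 := by
    have hu : IsUnit (s • (1 : Matrix Unit Unit ℂ)) := by
      rw [← hSs]; exact isUnit_of_invertible _
    rw [Matrix.isUnit_iff_isUnit_det] at hu
    simp only [Matrix.det_smul, Matrix.det_one, mul_one, Fintype.card_unit, pow_one] at hu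
    exact hu.ne_zero
  have hinvS : ⅟(Bd - Br * ⅟Bk * Bc) = s⁻¹ • (1 : Matrix Unit Unit ℂ) := by
    apply invOf_eq_right_inv
    rw [hSs, Matrix.smul_mul, one_mul, smul_smul, mul_inv_cancel₀ hsne, one_smul]
  have key : B⁻¹.trace = Bk⁻¹.trace + s⁻¹ * q + s⁻¹ := by
    have t1 : B⁻¹.trace = (Matrix.fromBlocks Bk Bc Br Bd)⁻¹.trace := by
      rw [← hM, Matrix.inv_submatrix_equiv, aux_trace_submatrix_equiv]
    rw [t1, ← invOf_eq_nonsing_inv, Matrix.invOf_fromBlocks₁₁_eq, aux_trace_fromBlocks,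
      Matrix.trace_add, hinvS]
    have t2 : (⅟Bk * Bc * (s⁻¹ • (1 : Matrix Unit Unit ℂ)) * Br * ⅟Bk).trace = s⁻¹ * q := by
      rw [Matrix.mul_smul, Matrix.mul_one, Matrix.smul_mul, Matrix.smul_mul, Matrix.trace_smul,
        smul_eq_mul]
      congr 1
      rw [Matrix.mul_assoc, hcol, hrow, hq]
      simp only [Matrix.trace, Matrix.diag, Matrix.mul_apply, Matrix.of_apply]
      rw [pow_two, ← Matrix.mulVec_mulVec, Matrix.dotProduct_mulVec]
      simp only [Finset.univ_unique, Finset.sum_singleton]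
      rw [dotProduct]
      exact Finset.sum_congr rfl fun i _ => mul_comm _ _
    rw [t2]
    have t3 : (s⁻¹ • (1 : Matrix Unit Unit ℂ)).trace = s⁻¹ := by
      simp [Matrix.trace_smul, Matrix.trace_one]
    rw [t3, invOf_eq_nonsing_inv]
  rw [key]
  field_simp
  ring
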